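/- For all x ∈ ℝ and q ∈ [0,1), the tangential angle identity ∫₀^x 2q·cn_p(σ,q) dσ = 2 arcsin(q · sn_p(x,q)) holds. -/

import Mathlib

/-!
With `σ = F1 p q φ` one has `dσ = |cos φ|^(1-2/p) / √(1 - q² sin² φ) dφ` and
`cn_p(σ) = |cos φ|^(2/p-1) cos φ`, so the integrand becomes `2q cos φ / √(1 - q² sin² φ)`, the
derivative of `2 arcsin (q sin φ)`. Since `F1 p q` is not differentiable where `cos φ = 0` when
`p < 2`, instead of changing variables we show that the difference of the two sides, as a function
of `φ`, is continuous with zero derivative off the countable zero set of `cos`, hence constant.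
The analytic input is the local integrability of `|cos|^(1-2/p)`, which holds because
`1 - 2/p > -1`.
-/

open Real MeasureTheory Set intervalIntegral Filter

noncomputable section

/-- Incomplete p-elliptic integral of the first kind, type 1. -/
def F1 (p q x : ℝ) : ℝ :=
  ∫ θ in (0:ℝ)..x, |Real.cos θ| ^ (1 - 2/p) / Real.sqrt (1 - q^2 * Real.sin θ ^ 2)

/-- Complete p-elliptic integral of the first kind, type 1. -/
def K1 (p q : ℝ) : ℝ := F1 p q (π/2)

/-- Incomplete p-elliptic integral of the second kind, type 1. -/
def E1 (p q x : ℝ) : ℝ :=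
  ∫ θ in (0:ℝ)..x, Real.sqrt (1 - q^2 * Real.sin θ ^ 2) * |Real.cos θ| ^ (1 - 2/p)

/-- Complete p-elliptic integral of the second kind, type 1. -/
def E1c (p q : ℝ) : ℝ := E1 p q (π/2)

/-- Incomplete p-elliptic integral of the first kind, type 2. -/
def F2 (p q x : ℝ) : ℝ :=
  ∫ θ in (0:ℝ)..x, (1 - q^2 * Real.sin θ ^ 2) ^ (-(1/p))

/-- Complete p-elliptic integral of the first kind, type 2. -/
def K2 (p q : ℝ) : ℝ := F2 p q (π/2)

open Classical in
/-- Domain of the amplitude parametrization: restricted to `(-π/2, π/2)` when `q = 1` and `p ≤ 2`. -/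
def amDom (p q : ℝ) : Set ℝ := if q = 1 ∧ p ≤ 2 then Ioo (-(π/2)) (π/2) else univ

/-- `g` is the inverse of `f`, with `f` regarded as a bijection from `S` onto `ℝ`. -/
def IsInverseOn (f g : ℝ → ℝ) (S : Set ℝ) : Prop :=
  (∀ y ∈ S, g (f y) = y) ∧ ∀ x : ℝ, g x ∈ S ∧ f (g x) = x

open Topology

lemma continuous_abs_rpow_mul_self {a : ℝ} (ha : -1 < a) :
    Continuous fun u : ℝ => |u| ^ a * u := by
  have ha' : a + 1 ≠ 0 := by linarith
  refine continuous_iff_continuousAt.2 fun x => ?_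
  rcases eq_or_ne x 0 with rfl | hx
  · have hbound : ∀ u : ℝ, ‖|u| ^ a * u‖ ≤ |u| ^ (a + 1) := fun u => by
      rcases eq_or_ne u 0 with rfl | hu
      · simp [zero_rpow ha']
      · rw [norm_mul, norm_of_nonneg (by positivity), norm_eq_abs,
          rpow_add_one (abs_ne_zero.2 hu)]
    have hlim : Tendsto (fun u : ℝ => |u| ^ (a + 1)) (𝓝 0) (𝓝 0) := by
      simpa [zero_rpow ha'] using
        (continuous_abs.rpow_const fun _ => Or.inr (by linarith : (0 : ℝ) ≤ a + 1)).tendsto 0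
    simpa [ContinuousAt] using squeeze_zero_norm hbound hlim
  · exact (continuous_abs.continuousAt.rpow_const (Or.inl (abs_ne_zero.2 hx))).mul
      continuousAt_id

/-- Jordan's inequality `cos t ≥ (2 / π) (π / 2 - t)` dominates `|cos t|^r` by the integrable
`(2 / π)^r (π / 2 - t)^r`. -/
lemma intervalIntegrable_abs_cos_rpow_zero_pi_div_two {r : ℝ} (hr₁ : -1 < r) (hr₀ : r < 0) :
    IntervalIntegrable (fun t => |cos t| ^ r) volume 0 (π / 2) := by
  have hdom : IntervalIntegrable (fun t => (2 / π) ^ r * (π / 2 - t) ^ r) volume 0 (π / 2) := by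
    simpa using ((intervalIntegrable_rpow' (a := π / 2) (b := 0) hr₁).comp_sub_left
      (π / 2)).const_mul ((2 / π) ^ r)
  refine hdom.mono_fun' (continuous_cos.abs.measurable.pow_const r).aestronglyMeasurable ?_
  refine ae_restrict_of_forall_mem measurableSet_uIoc fun t ht => ?_
  rw [uIoc_of_le (by positivity)] at ht
  have hcos : 2 / π * (π / 2 - t) ≤ cos t := by
    simpa [sin_pi_div_two_sub] using mul_le_sin (x := π / 2 - t) (by linarith [ht.2])
      (by linarith [ht.1])
  dsimp only
  rw [norm_of_nonneg (by positivity)]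
  rcases ht.2.lt_or_eq with ht₂ | rfl
  · have hpos : 0 < 2 / π * (π / 2 - t) := mul_pos (by positivity) (by linarith)
    rw [← mul_rpow (by positivity) (by linarith), abs_of_nonneg (hpos.le.trans hcos)]
    exact rpow_le_rpow_of_nonpos hpos hcos hr₀.le
  · simp [zero_rpow hr₀.ne]

lemma intervalIntegrable_abs_cos_rpow {r : ℝ} (hr : -1 < r) (a b : ℝ) :
    IntervalIntegrable (fun t => |cos t| ^ r) volume a b := by
  rcases le_or_gt 0 r with hr₀ | hr₀
  · exact (continuous_cos.abs.rpow_const fun _ => Or.inr hr₀).intervalIntegrable a b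
  have hperiodic : Function.Periodic (fun t => |cos t| ^ r) π := fun t => by simp [cos_add_pi]
  have hhalf := intervalIntegrable_abs_cos_rpow_zero_pi_div_two hr hr₀
  have hreflect : IntervalIntegrable (fun t => |cos t| ^ r) volume (π / 2) π := by
    simpa [cos_pi_sub, (by ring : π - π / 2 = π / 2)] using (hhalf.comp_sub_left π).symm
  exact hperiodic.intervalIntegrable₀ pi_ne_zero (hhalf.trans hreflect) a b

lemma one_sub_sq_mul_sin_sq_pos {q : ℝ} (hq : |q| < 1) (θ : ℝ) : 0 < 1 - q ^ 2 * sin θ ^ 2 := by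
  have : q ^ 2 < 1 := (sq_lt_one_iff_abs_lt_one q).2 hq
  nlinarith [sin_sq_le_one θ, sq_nonneg q]

lemma hasDerivAt_arcsin_mul_sin {q : ℝ} (hq : |q| < 1) (y : ℝ) :
    HasDerivAt (fun y => arcsin (q * sin y)) (q * cos y / √(1 - q ^ 2 * sin y ^ 2)) y := by
  have hlt : |q * sin y| < 1 := by
    rw [abs_mul]
    nlinarith [abs_sin_le_one y, abs_nonneg (sin y), abs_nonneg q]
  have h := (hasDerivAt_arcsin (neg_lt_of_abs_lt hlt).ne' (lt_of_abs_lt hlt).ne).comp y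
    ((hasDerivAt_sin y).const_mul q)
  rwa [mul_pow, one_div_mul_eq_div] at h

lemma countable_setOf_cos_eq_zero : {y : ℝ | cos y = 0}.Countable :=
  (countable_range fun k : ℤ => (2 * k + 1) * π / 2).mono fun _ hy => by
    obtain ⟨k, hk⟩ := cos_eq_zero_iff.1 hy
    exact ⟨k, hk.symm⟩

lemma eq_of_hasDerivAt_zero_off_countable {E : Type*} [NormedAddCommGroup E] [NormedSpace ℝ E]
    [CompleteSpace E] {f : ℝ → E} {s : Set ℝ} (hs : s.Countable) (hf : Continuous f)
    (hd : ∀ x ∉ s, HasDerivAt f 0 x) (a b : ℝ) : f a = f b := by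
  have := integral_eq_of_hasDerivAt_off_countable f 0 (a := a) (b := b) hs hf.continuousOn
    (fun x hx => hd x hx.2) (intervalIntegrable_const (c := (0 : E)))
  simp only [Pi.zero_apply, intervalIntegral.integral_zero] at this
  exact (sub_eq_zero.1 this.symm).symm

lemma IsInverseOn.continuous_of_monotone {f g : ℝ → ℝ} (h : IsInverseOn f g univ)
    (hf : Monotone f) : Continuous g := by
  refine Monotone.continuous_of_surjective (fun x y hxy => ?_) fun y => ⟨f y, h.1 y trivial⟩
  by_contra! hlt
  have hyx := hf hlt.le
  rw [(h.2 x).2, (h.2 y).2] at hyx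
  exact hlt.ne (congrArg g (le_antisymm hyx hxy))

def F1Density (p q θ : ℝ) : ℝ := |cos θ| ^ (1 - 2 / p) / √(1 - q ^ 2 * sin θ ^ 2)

namespace F1Density

variable {p q : ℝ}

lemma nonneg (θ : ℝ) : 0 ≤ F1Density p q θ := by
  unfold F1Density
  positivity

lemma intervalIntegrable (hp : 1 < p) (hq : |q| < 1) (a b : ℝ) :
    IntervalIntegrable (F1Density p q) volume a b := by
  have hr : -1 < 1 - 2 / p := by
    have : 2 / p < 2 := (div_lt_iff₀ (by linarith)).2 (by linarith)
    linarith
  have hcont : Continuous fun θ => (√(1 - q ^ 2 * sin θ ^ 2))⁻¹ :=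
    (by fun_prop : Continuous fun θ => √(1 - q ^ 2 * sin θ ^ 2)).inv₀ fun θ =>
      (sqrt_pos.2 (one_sub_sq_mul_sin_sq_pos hq θ)).ne'
  have hmul : F1Density p q = fun θ => |cos θ| ^ (1 - 2 / p) * (√(1 - q ^ 2 * sin θ ^ 2))⁻¹ :=
    funext fun θ => div_eq_mul_inv _ _
  rw [hmul]
  exact (intervalIntegrable_abs_cos_rpow hr a b).mul_continuousOn hcont.continuousOn

lemma continuousOn (hq : |q| < 1) : ContinuousOn (F1Density p q) {θ | cos θ ≠ 0} :=
  fun θ hθ => (((continuous_cos.continuousAt.abs).rpow_const (Or.inl (abs_ne_zero.2 hθ))).div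
    (by fun_prop) (sqrt_pos.2 (one_sub_sq_mul_sin_sq_pos hq θ)).ne').continuousWithinAt

end F1Density

section F1

variable {p q : ℝ}

lemma hasDerivAt_F1 (hp : 1 < p) (hq : |q| < 1) {y : ℝ} (hy : cos y ≠ 0) :
    HasDerivAt (F1 p q) (F1Density p q y) y :=
  have hopen : IsOpen {θ : ℝ | cos θ ≠ 0} := isOpen_ne_fun continuous_cos continuous_const
  integral_hasDerivAt_right (F1Density.intervalIntegrable hp hq 0 y)
    ((F1Density.continuousOn hq).stronglyMeasurableAtFilter hopen y hy)
    ((F1Density.continuousOn hq).continuousAt (hopen.mem_nhds hy))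

lemma continuous_F1 (hp : 1 < p) (hq : |q| < 1) : Continuous (F1 p q) :=
  continuous_primitive (F1Density.intervalIntegrable hp hq) 0

lemma monotone_F1 (hp : 1 < p) (hq : |q| < 1) : Monotone (F1 p q) := fun a b hab => by
  have hint := F1Density.intervalIntegrable hp hq
  have h := integral_nonneg (μ := volume) hab fun θ _ => F1Density.nonneg (p := p) (q := q) θ
  rw [← integral_interval_sub_left (hint 0 b) (hint 0 a)] at h
  exact sub_nonneg.1 h

end F1

section Amplitude

variable {p q : ℝ} {am : ℝ → ℝ}

lemma continuous_two_mul_mul_cn (hp : 1 < p) (hq : |q| < 1)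
    (ham : IsInverseOn (F1 p q) am univ) :
    Continuous fun σ => 2 * q * (|cos (am σ)| ^ (2 / p - 1) * cos (am σ)) := by
  have ha : -1 < 2 / p - 1 := by linarith [div_pos two_pos (zero_lt_one.trans hp)]
  exact continuous_const.mul ((continuous_abs_rpow_mul_self ha).comp
    (continuous_cos.comp (ham.continuous_of_monotone (monotone_F1 hp hq))))

lemma hasDerivAt_integral_two_mul_mul_cn_comp_F1 (hp : 1 < p) (hq : |q| < 1)
    (ham : IsInverseOn (F1 p q) am univ) {y : ℝ} (hy : cos y ≠ 0) :
    HasDerivAt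
      (fun y => ∫ σ in (0:ℝ)..F1 p q y, 2 * q * (|cos (am σ)| ^ (2 / p - 1) * cos (am σ)))
      (2 * (q * cos y / √(1 - q ^ 2 * sin y ^ 2))) y := by
  have hpow : |cos y| ^ (2 / p - 1) * |cos y| ^ (1 - 2 / p) = 1 := by
    rw [← rpow_add (abs_pos.2 hy)]
    norm_num
  have hcn := continuous_two_mul_mul_cn hp hq ham
  refine ((hcn.integral_hasStrictDerivAt 0 _).hasDerivAt.comp y
    (hasDerivAt_F1 hp hq hy)).congr_deriv ?_
  simp only [ham.1 y trivial, F1Density]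
  linear_combination (2 * q * cos y / √(1 - q ^ 2 * sin y ^ 2)) * hpow

end Amplitude

/-- Tangential-angle identity: `∫₀^x 2q·cn_p(σ,q) dσ = 2 arcsin(q·sn_p(x,q))`. -/
theorem wavelike_angle (p q : ℝ) (hp : 1 < p) (hq : q ∈ Set.Ico (0:ℝ) 1)
    (am : ℝ → ℝ) (ham : IsInverseOn (F1 p q) am Set.univ) :
    ∀ x : ℝ,
      (∫ σ in (0:ℝ)..x, 2 * q * (|Real.cos (am σ)| ^ (2/p - 1) * Real.cos (am σ)))
        = 2 * Real.arcsin (q * Real.sin (am x)) := by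
  have hq' : |q| < 1 := abs_lt.2 ⟨by linarith [hq.1], hq.2⟩
  set H : ℝ → ℝ := fun y =>
    (∫ σ in (0:ℝ)..F1 p q y, 2 * q * (|cos (am σ)| ^ (2 / p - 1) * cos (am σ)))
      - 2 * arcsin (q * sin y)
  have hH : Continuous H :=
    ((continuous_primitive (continuous_two_mul_mul_cn hp hq' ham).intervalIntegrable 0).comp
      (continuous_F1 hp hq')).sub (by fun_prop)
  have hH' : ∀ y ∉ {y : ℝ | cos y = 0}, HasDerivAt H 0 y := fun y hy =>
    ((hasDerivAt_integral_two_mul_mul_cn_comp_F1 hp hq' ham hy).sub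
      ((hasDerivAt_arcsin_mul_sin hq' y).const_mul 2)).congr_deriv (sub_self _)
  have hH0 : H 0 = 0 := by simp [H, F1]
  intro x
  have hHx : H (am x) = 0 :=
    (eq_of_hasDerivAt_zero_off_countable countable_setOf_cos_eq_zero hH hH' 0 (am x)).symm.trans hH0
  simp only [H, (ham.2 x).2] at hHx
  linarith

end
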